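/- For nonnegative integers k, n, t with 1 ≤ t ≤ n, Σ_{i=0}^{k} q^{(k-i)t} · [t-1+i choose i]_q · [n-t+k-i choose k-i]_q = [n+k choose k]_q, as an identity of polynomials in q. -/
import Mathlib


/-- The `q`-shifted factorial `(q;q)_n = (1-q)(1-q²)⋯(1-qⁿ)` in `ℚ(q)`. -/
noncomputable def qShiftedFactorial (n : ℕ) : RatFunc ℚ :=
  ∏ j ∈ Finset.range n, (1 - RatFunc.X ^ (j + 1))

/-- The Gaussian (q-)binomial coefficient. -/
noncomputable def gaussBinom (n k : ℕ) : RatFunc ℚ :=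
  if k ≤ n then qShiftedFactorial n / (qShiftedFactorial k * qShiftedFactorial (n - k)) else 0

lemma one_sub_X_pow_ne (j : ℕ) : (1 - RatFunc.X ^ (j + 1) : RatFunc ℚ) ≠ 0 := by
  have heq : (1 - RatFunc.X ^ (j+1) : RatFunc ℚ)
      = algebraMap (Polynomial ℚ) (RatFunc ℚ) (1 - Polynomial.X ^ (j+1)) := by
    simp [map_sub, map_pow, RatFunc.algebraMap_X]
  rw [heq]
  apply RatFunc.algebraMap_ne_zero
  intro h
  have := congrArg (Polynomial.eval 0) h
  simp at this

lemma qSF_ne_zero (n : ℕ) : qShiftedFactorial n ≠ 0 := by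
  apply Finset.prod_ne_zero_iff.mpr
  intro j _
  exact one_sub_X_pow_ne j

lemma qSF_zero : qShiftedFactorial 0 = 1 := by simp [qShiftedFactorial]

lemma qSF_succ (n : ℕ) :
    qShiftedFactorial (n+1) = qShiftedFactorial n * (1 - RatFunc.X ^ (n+1)) := by
  simp [qShiftedFactorial, Finset.prod_range_succ]

lemma gaussBinom_zero (n : ℕ) : gaussBinom n 0 = 1 := by
  simp [gaussBinom, qSF_zero, div_self (qSF_ne_zero n)]

lemma gaussBinom_self (n : ℕ) : gaussBinom n n = 1 := by
  simp [gaussBinom, qSF_zero, div_self (qSF_ne_zero n)]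

lemma pascal (j a : ℕ) :
    gaussBinom (j + a + 1) (j + 1)
      = gaussBinom (j + a) (j + 1) + RatFunc.X ^ a * gaussBinom (j + a) j := by
  rcases a with _ | b
  · simp [gaussBinom_self]
    rw [gaussBinom]
    simp
  · have h1 : j + 1 ≤ j + (b+1) + 1 := by omega
    have h2 : j + 1 ≤ j + (b+1) := by omega
    have h3 : j ≤ j + (b+1) := by omega
    rw [gaussBinom, gaussBinom, gaussBinom, if_pos h1, if_pos h2, if_pos h3]
    have e1 : j + (b+1) + 1 - (j+1) = b + 1 := by omega
    have e2 : j + (b+1) - (j+1) = b := by omega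
    have e3 : j + (b+1) - j = b + 1 := by omega
    rw [e1, e2, e3]
    have hjb : j + (b+1) + 1 = (j + b + 1) + 1 := by omega
    have hjb2 : j + (b+1) = (j + b) + 1 := by omega
    rw [hjb, hjb2, qSF_succ (j+b+1), qSF_succ (j+b), qSF_succ b, qSF_succ j]
    have A := qSF_ne_zero (j+b)
    have B := qSF_ne_zero j
    have C := qSF_ne_zero b
    have D := one_sub_X_pow_ne (j+b+1)
    have E := one_sub_X_pow_ne j
    have F := one_sub_X_pow_ne b
    field_simp
    ring

lemma aux (s : ℕ) : ∀ k m : ℕ,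
    ∑ i ∈ Finset.range (k+1),
        RatFunc.X ^ ((k-i)*(s+1)) * gaussBinom (s+i) i * gaussBinom (m + (k-i)) (k-i)
      = gaussBinom (s+1+m+k) k := by
  intro k
  induction k with
  | zero =>
    intro m
    simp [gaussBinom_zero]
  | succ k ih =>
    have key : ∀ m : ℕ,
        (∑ i ∈ Finset.range (k+1+1),
          RatFunc.X ^ ((k+1-i)*(s+1)) * gaussBinom (s+i) i *
            gaussBinom (m+1 + (k+1-i)) (k+1-i))
        = (∑ i ∈ Finset.range (k+1+1),
            RatFunc.X ^ ((k+1-i)*(s+1)) * gaussBinom (s+i) i *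
              gaussBinom (m + (k+1-i)) (k+1-i))
          + RatFunc.X ^ (s+1) * RatFunc.X ^ (m+1) *
            ∑ i ∈ Finset.range (k+1),
              RatFunc.X ^ ((k-i)*(s+1)) * gaussBinom (s+i) i *
                gaussBinom (m+1 + (k-i)) (k-i) := by
      intro m
      have hlast : (k+1) - (k+1) = 0 := by omega
      rw [Finset.sum_range_succ, Finset.sum_range_succ
        (fun i => RatFunc.X ^ ((k+1-i)*(s+1)) * gaussBinom (s+i) i *
              gaussBinom (m + (k+1-i)) (k+1-i)), hlast]
      simp only [Nat.zero_mul, pow_zero, one_mul, add_zero, gaussBinom_zero, mul_one]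
      have hmain : (∑ i ∈ Finset.range (k+1),
            RatFunc.X ^ ((k+1-i)*(s+1)) * gaussBinom (s+i) i *
              gaussBinom (m+1 + (k+1-i)) (k+1-i))
          = (∑ i ∈ Finset.range (k+1),
              RatFunc.X ^ ((k+1-i)*(s+1)) * gaussBinom (s+i) i *
                gaussBinom (m + (k+1-i)) (k+1-i))
            + RatFunc.X ^ (s+1) * RatFunc.X ^ (m+1) *
              ∑ i ∈ Finset.range (k+1),
                RatFunc.X ^ ((k-i)*(s+1)) * gaussBinom (s+i) i *
                  gaussBinom (m+1 + (k-i)) (k-i) := by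
        rw [Finset.mul_sum, ← Finset.sum_add_distrib]
        apply Finset.sum_congr rfl
        intro i hi
        rw [Finset.mem_range] at hi
        obtain ⟨j, rfl⟩ : ∃ j, k = i + j := ⟨k - i, by omega⟩
        have e1 : i + j + 1 - i = j + 1 := by omega
        have e2 : i + j - i = j := by omega
        rw [e1, e2]
        rw [show m+1+(j+1) = j+(m+1)+1 from by omega, pascal j (m+1)]
        rw [show m+(j+1) = j+(m+1) from by omega, show m+1+j = j+(m+1) from by omega]
        rw [show (j+1)*(s+1) = j*(s+1) + (s+1) from by ring, pow_add]
        ring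
      rw [hmain]
      ring
    intro m
    induction m with
    | zero =>
      have ih0 : ∑ i ∈ Finset.range (k+1),
          RatFunc.X ^ ((k-i)*(s+1)) * gaussBinom (s+i) i = gaussBinom (s+1+k) k := by
        have h := ih 0
        rw [show s+1+0+k = s+1+k from by omega] at h
        rw [← h]
        apply Finset.sum_congr rfl
        intro i hi
        rw [zero_add, gaussBinom_self, mul_one]
      rw [Finset.sum_range_succ]
      have hlast : (k+1) - (k+1) = 0 := by omega
      rw [hlast]
      simp only [gaussBinom_zero, mul_one, zero_add, Nat.zero_mul, pow_zero, one_mul]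
      have hstep : ∑ i ∈ Finset.range (k+1),
          RatFunc.X ^ ((k+1-i)*(s+1)) * gaussBinom (s+i) i * gaussBinom (k+1-i) (k+1-i)
          = RatFunc.X ^ (s+1) * ∑ i ∈ Finset.range (k+1),
              RatFunc.X ^ ((k-i)*(s+1)) * gaussBinom (s+i) i := by
        rw [Finset.mul_sum]
        apply Finset.sum_congr rfl
        intro i hi
        rw [Finset.mem_range] at hi
        rw [gaussBinom_self, mul_one]
        rw [show (k+1-i)*(s+1) = (s+1) + (k-i)*(s+1) from by
          have : k+1-i = (k-i)+1 := by omega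
          rw [this]; ring]
        rw [pow_add]; ring
      rw [hstep, ih0]
      rw [show s+1+0+(k+1) = k+(s+1)+1 from by omega, pascal k (s+1),
        show k+(s+1) = s+1+k from by omega,
        show s+(k+1) = s+1+k from by omega]
      ring
    | succ m ihm =>
      rw [key m, ihm, ih (m+1)]
      rw [show s+1+(m+1)+(k+1) = k+(s+m+2)+1 from by omega, pascal k (s+m+2),
        show k+(s+m+2) = s+1+m+(k+1) from by omega,
        show s+1+(m+1)+k = s+1+m+(k+1) from by omega]
      ring

/-- `∑_{i=0}^{k} q^{(k-i)t} [t-1+i choose i]_q [n-t+k-i choose k-i]_q = [n+k choose k]_q`. -/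
theorem q_vandermonde_multichoose (n k t : ℕ) (ht1 : 1 ≤ t) (ht : t ≤ n) :
    ∑ i ∈ Finset.range (k + 1),
        RatFunc.X ^ ((k - i) * t) * gaussBinom (t - 1 + i) i *
          gaussBinom (n - t + (k - i)) (k - i) =
      gaussBinom (n + k) k := by
  obtain ⟨s, rfl⟩ : ∃ s, t = s + 1 := ⟨t - 1, by omega⟩
  obtain ⟨m, rfl⟩ : ∃ m, n = s + 1 + m := ⟨n - (s+1), by omega⟩
  have h := aux s k m
  rw [show s+1+m+k = s+1+m+k from rfl] at h
  rw [← h]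
  apply Finset.sum_congr rfl
  intro i hi
  rw [show s+1-1+i = s+i from by omega, show s+1+m-(s+1) = m from by omega]
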